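/- Let T be a finite tree with p ≥ 3 vertices, q = p − 1 edges and bipartition (X, Y). If T admits a set-ordered graceful labelling with respect to (X, Y), then there exists a bijection g : V(T) → {1, 2, …, p} such that the residues (g(u) + g(v)) mod (p − 1), over all p − 1 edges uv of T, are pairwise distinct. -/

import Mathlib

/-- The induced edge label `|f u - f v|` for a vertex labelling `f`. -/
def elabel {V : Type*} (f : V → ℕ) (u v : V) : ℕ :=
  max (f u) (f v) - min (f u) (f v)

/-- `(X, Y)` is a bipartition of the graph `G`: the two parts cover all vertices,
are disjoint, and every edge joins a vertex of `X` to a vertex of `Y`. -/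
def IsBipartitionOf {V : Type*} (G : SimpleGraph V) (X Y : Finset V) : Prop :=
  (∀ v : V, v ∈ X ∨ v ∈ Y) ∧ (∀ v : V, ¬(v ∈ X ∧ v ∈ Y)) ∧
    ∀ ⦃u v : V⦄, G.Adj u v → (u ∈ X ∧ v ∈ Y) ∨ (u ∈ Y ∧ v ∈ X)

/-- `f` is a set-ordered graceful labelling of `G` (with `q` edges) with respect to the
bipartition `(X, Y)`: `f` is injective into `{0,…,q}`, the induced edge labels
`|f u - f v|` are pairwise distinct and form exactly `{1,…,q}`, and every label on `X`
is smaller than every label on `Y`. -/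
def IsSetOrderedGraceful {V : Type*} (G : SimpleGraph V) (X Y : Finset V) (q : ℕ)
    (f : V → ℕ) : Prop :=
  Function.Injective f ∧ (∀ v : V, f v ≤ q) ∧
    (∀ u v u' v' : V, G.Adj u v → G.Adj u' v' →
      elabel f u v = elabel f u' v' → s(u, v) = s(u', v')) ∧
    (∀ u v : V, G.Adj u v → 1 ≤ elabel f u v ∧ elabel f u v ≤ q) ∧
    (∀ m : ℕ, 1 ≤ m → m ≤ q → ∃ u v : V, G.Adj u v ∧ elabel f u v = m) ∧
    (∀ x ∈ X, ∀ y ∈ Y, f x < f y)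

/-- `f` is a set-ordered odd-graceful labelling of `G` (with `q` edges) with respect to
the bipartition `(X, Y)`: `f` is injective into `{0,…,2q-1}`, the induced edge labels
`|f u - f v|` are pairwise distinct and form exactly the odd numbers `{1,3,…,2q-1}`,
and every label on `X` is smaller than every label on `Y`. -/
def IsSetOrderedOddGraceful {V : Type*} (G : SimpleGraph V) (X Y : Finset V) (q : ℕ)
    (f : V → ℕ) : Prop :=
  Function.Injective f ∧ (∀ v : V, f v ≤ 2 * q - 1) ∧
    (∀ u v u' v' : V, G.Adj u v → G.Adj u' v' →
      elabel f u v = elabel f u' v' → s(u, v) = s(u', v')) ∧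
    (∀ u v : V, G.Adj u v → Odd (elabel f u v) ∧ elabel f u v ≤ 2 * q - 1) ∧
    (∀ m : ℕ, Odd m → m ≤ 2 * q - 1 → ∃ u v : V, G.Adj u v ∧ elabel f u v = m) ∧
    (∀ x ∈ X, ∀ y ∈ Y, f x < f y)

/-!
Reflect the labels of `X` below the threshold `s = max f(X)`: put `g x = s + 1 - f x` on `X` and
`g y = f y + 1` on `Y`. Since every label on `X` is below every label on `Y`, `g` is a bijection onto
`{1, …, p}`, and an edge `xy` gets `g x + g y = s + 2 + (f y - f x)`. The edge sums are thus a fixed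
shift of the graceful edge labels `1, …, q`, which are pairwise incongruent modulo `q`.
-/

open Finset

theorem Nat.eq_of_add_mod_eq_of_mem_Icc {q c a b : ℕ} (ha : a ∈ Icc 1 q) (hb : b ∈ Icc 1 q)
    (h : (c + a) % q = (c + b) % q) : a = b := by
  rw [mem_Icc] at ha hb
  have hmod : (a - 1) + 1 ≡ (b - 1) + 1 [MOD q] := by
    rw [Nat.sub_add_cancel ha.1, Nat.sub_add_cancel hb.1]
    exact Nat.ModEq.add_left_cancel' c h
  have := (Nat.ModEq.add_right_cancel' 1 hmod).eq_of_lt_of_lt (by omega) (by omega)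
  omega

theorem Fintype.exists_eq_of_injective_of_mem_Icc {V : Type*} [Fintype V] {g : V → ℕ}
    (hg : Function.Injective g) (hbound : ∀ v, g v ∈ Icc 1 (Fintype.card V)) :
    ∀ m ∈ Icc 1 (Fintype.card V), ∃ v, g v = m := by
  intro m hm
  obtain ⟨v, -, rfl⟩ := surj_on_of_inj_on_of_card_le (s := univ) (fun v _ ↦ g v)
    (fun v _ ↦ hbound v) (fun _ _ _ _ h ↦ hg h) (by simp) m hm
  exact ⟨v, rfl⟩

theorem elabel_eq_sub_of_lt {V : Type*} {f : V → ℕ} {u v : V} (h : f u < f v) :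
    elabel f u v = f v - f u := by
  simp only [elabel, max_eq_right h.le, min_eq_left h.le]

theorem elabel_comm {V : Type*} (f : V → ℕ) (u v : V) : elabel f u v = elabel f v u := by
  simp only [elabel, max_comm, min_comm]

theorem Finset.sup_lt_of_nonempty {ι : Type*} {s : Finset ι} {f : ι → ℕ} {a : ℕ}
    (hs : s.Nonempty) (h : ∀ b ∈ s, f b < a) : s.sup f < a := by
  obtain ⟨b, hb⟩ := hs
  exact (Finset.sup_lt_iff (bot_lt_of_lt (h b hb))).2 h

def reflectLabel {V : Type*} (X : Finset V) [DecidablePred (· ∈ X)] (f : V → ℕ) (v : V) : ℕ :=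
  if v ∈ X then X.sup f + 1 - f v else f v + 1

namespace reflectLabel

variable {V : Type*} {X Y : Finset V} [DecidablePred (· ∈ X)] {f : V → ℕ}

theorem of_mem {x : V} (hx : x ∈ X) : reflectLabel X f x = X.sup f + 1 - f x := if_pos hx

theorem of_not_mem {y : V} (hy : y ∉ X) : reflectLabel X f y = f y + 1 := if_neg hy

theorem injective (hcov : ∀ v, v ∈ X ∨ v ∈ Y) (hdisj : ∀ v, ¬(v ∈ X ∧ v ∈ Y))
    (hord : ∀ x ∈ X, ∀ y ∈ Y, f x < f y) (hinj : Function.Injective f) :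
    Function.Injective (reflectLabel X f) := by
  have hlt {x y : V} (hx : x ∈ X) (hy : y ∈ Y) : reflectLabel X f x < reflectLabel X f y := by
    rw [of_mem hx, of_not_mem fun h ↦ hdisj y ⟨h, hy⟩]
    have := sup_lt_of_nonempty ⟨x, hx⟩ fun x' hx' ↦ hord x' hx' y hy
    omega
  intro a b hab
  rcases hcov a with ha | ha <;> rcases hcov b with hb | hb
  · rw [of_mem ha, of_mem hb] at hab
    have := le_sup (f := f) ha
    have := le_sup (f := f) hb
    exact hinj (by omega)
  · exact absurd hab (hlt ha hb).ne
  · exact absurd hab (hlt hb ha).ne'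
  · rw [of_not_mem fun h ↦ hdisj a ⟨h, ha⟩, of_not_mem fun h ↦ hdisj b ⟨h, hb⟩] at hab
    exact hinj (by omega)

theorem mem_Icc {q : ℕ} (hle : ∀ v, f v ≤ q) (v : V) : reflectLabel X f v ∈ Icc 1 (q + 1) := by
  rw [Finset.mem_Icc]
  by_cases hv : v ∈ X
  · rw [of_mem hv]
    have := le_sup (f := f) hv
    have : X.sup f ≤ q := Finset.sup_le fun v _ ↦ hle v
    omega
  · rw [of_not_mem hv]
    have := hle v
    omega

theorem add_eq_of_mem_of_mem (hdisj : ∀ v, ¬(v ∈ X ∧ v ∈ Y))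
    (hord : ∀ x ∈ X, ∀ y ∈ Y, f x < f y) {x y : V} (hx : x ∈ X) (hy : y ∈ Y) :
    reflectLabel X f x + reflectLabel X f y = X.sup f + 2 + elabel f x y := by
  rw [of_mem hx, of_not_mem fun h ↦ hdisj y ⟨h, hy⟩, elabel_eq_sub_of_lt (hord x hx y hy)]
  have := le_sup (f := f) hx
  have := sup_lt_of_nonempty ⟨x, hx⟩ fun x' hx' ↦ hord x' hx' y hy
  omega

theorem add_eq_of_adj (hdisj : ∀ v, ¬(v ∈ X ∧ v ∈ Y))
    (hord : ∀ x ∈ X, ∀ y ∈ Y, f x < f y) {G : SimpleGraph V}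
    (hedge : ∀ ⦃u v : V⦄, G.Adj u v → (u ∈ X ∧ v ∈ Y) ∨ (u ∈ Y ∧ v ∈ X)) {u v : V}
    (huv : G.Adj u v) :
    reflectLabel X f u + reflectLabel X f v = X.sup f + 2 + elabel f u v := by
  rcases hedge huv with ⟨hu, hv⟩ | ⟨hu, hv⟩
  · exact add_eq_of_mem_of_mem hdisj hord hu hv
  · rw [add_comm, elabel_comm]
    exact add_eq_of_mem_of_mem hdisj hord hv hu

end reflectLabel

theorem setOrderedGraceful_harmonious_general {V : Type*} [Fintype V]
    (G : SimpleGraph V)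
    (p : ℕ) (hp : Fintype.card V = p)
    (X Y : Finset V) (hbip : IsBipartitionOf G X Y)
    (f : V → ℕ) (hf : IsSetOrderedGraceful G X Y (p - 1) f) :
    ∃ g : V → ℕ,
      Function.Injective g ∧ (∀ v : V, 1 ≤ g v ∧ g v ≤ p) ∧
      (∀ m : ℕ, 1 ≤ m → m ≤ p → ∃ v : V, g v = m) ∧
      (∀ u v u' v' : V, G.Adj u v → G.Adj u' v' →
        (g u + g v) % (p - 1) = (g u' + g v') % (p - 1) → s(u, v) = s(u', v')) := by
  classical
  obtain ⟨hinj, hle, helinj, helrange, -, hord⟩ := hf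
  obtain ⟨hcov, hdisj, hedge⟩ := hbip
  subst hp
  have hginj := reflectLabel.injective hcov hdisj hord hinj
  have hbound (v : V) : reflectLabel X f v ∈ Icc 1 (Fintype.card V) := by
    have := reflectLabel.mem_Icc (X := X) hle v
    rwa [Nat.sub_add_cancel (Fintype.card_pos_iff.2 ⟨v⟩)] at this
  refine ⟨reflectLabel X f, hginj, fun v ↦ Finset.mem_Icc.1 (hbound v),
    fun m h1 h2 ↦ Fintype.exists_eq_of_injective_of_mem_Icc hginj hbound m
      (Finset.mem_Icc.2 ⟨h1, h2⟩), ?_⟩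
  intro u v u' v' huv huv' hmod
  rw [reflectLabel.add_eq_of_adj hdisj hord hedge huv,
    reflectLabel.add_eq_of_adj hdisj hord hedge huv'] at hmod
  exact helinj u v u' v' huv huv' <| Nat.eq_of_add_mod_eq_of_mem_Icc
    (Finset.mem_Icc.2 (helrange u v huv)) (Finset.mem_Icc.2 (helrange u' v' huv')) hmod

/-- If a finite tree with `p ≥ 3` vertices and `q = p - 1` edges admits a set-ordered
graceful labelling with respect to a bipartition `(X, Y)`, then there is a bijection
`g : V(T) → {1,…,p}` whose edge residues `(g u + g v) mod (p - 1)` are pairwise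
distinct over the edges. -/
theorem setOrderedGraceful_harmonious {V : Type*} [Fintype V] [DecidableEq V]
    (G : SimpleGraph V) (hT : G.IsTree)
    (p : ℕ) (hp : Fintype.card V = p) (hp3 : 3 ≤ p)
    (X Y : Finset V) (hbip : IsBipartitionOf G X Y)
    (f : V → ℕ) (hf : IsSetOrderedGraceful G X Y (p - 1) f) :
    ∃ g : V → ℕ,
      Function.Injective g ∧ (∀ v : V, 1 ≤ g v ∧ g v ≤ p) ∧
      (∀ m : ℕ, 1 ≤ m → m ≤ p → ∃ v : V, g v = m) ∧
      (∀ u v u' v' : V, G.Adj u v → G.Adj u' v' →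
        (g u + g v) % (p - 1) = (g u' + g v') % (p - 1) → s(u, v) = s(u', v')) :=
  setOrderedGraceful_harmonious_general G p hp X Y hbip f hf
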